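/- arXiv:0812.1462 — 2 statements merged into one kernel-verified Lean document; each statement's English description precedes it below -/
import Mathlib

section
/- Let Γ₁ and Γ₂ be propositional theories such that Γ₂ has no head atoms (no atom has a strictly positive occurrence in Γ₂). Then a set X of atoms is a stable model of Γ₁ ∪ Γ₂ if and only if X is a stable model of Γ₁ and X classically satisfies Γ₂. -/
inductive PForm (α : Type) : Type where
  | bot : PForm α
  | atom : α → PForm α
  | and : PForm α → PForm α → PForm α
  | or : PForm α → PForm α → PForm α
  | imp : PForm α → PForm α → PForm α

namespace PForm

variable {α : Type}

def top : PForm α := imp bot bot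

def neg (F : PForm α) : PForm α := imp F bot

def sat (X : Set α) : PForm α → Prop
  | bot => False
  | atom a => a ∈ X
  | and F G => sat X F ∧ sat X G
  | or F G => sat X F ∨ sat X G
  | imp F G => sat X F → sat X G

open Classical in
noncomputable def reduct (X : Set α) : PForm α → PForm α
  | bot => bot
  | atom a => if a ∈ X then atom a else bot
  | and F G => if sat X (and F G) then and (reduct X F) (reduct X G) else bot
  | or F G => if sat X (or F G) then or (reduct X F) (reduct X G) else bot
  | imp F G => if sat X (imp F G) then imp (reduct X F) (reduct X G) else bot

def headAtoms : PForm α → Set α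
  | bot => ∅
  | atom a => {a}
  | and F G => headAtoms F ∪ headAtoms G
  | or F G => headAtoms F ∪ headAtoms G
  | imp _ G => headAtoms G

def atomsOf : PForm α → Set α
  | bot => ∅
  | atom a => {a}
  | and F G => atomsOf F ∪ atomsOf G
  | or F G => atomsOf F ∪ atomsOf G
  | imp F G => atomsOf F ∪ atomsOf G

def htSat (X Y : Set α) : PForm α → Prop
  | bot => False
  | atom a => a ∈ X
  | and F G => htSat X Y F ∧ htSat X Y G
  | or F G => htSat X Y F ∨ htSat X Y G
  | imp F G => (htSat X Y F → htSat X Y G) ∧ sat Y (imp F G)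

end PForm

variable {α : Type}

/-- Satisfaction of a theory (set of formulas). -/
def satTh (X : Set α) (Γ : Set (PForm α)) : Prop := ∀ F ∈ Γ, PForm.sat X F

/-- The reduct of a theory relative to X. -/
noncomputable def reductTh (X : Set α) (Γ : Set (PForm α)) : Set (PForm α) :=
  PForm.reduct X '' Γ

/-- X is a stable model of Γ iff X is a minimal set satisfying Γ^X. -/
def StableModel (Γ : Set (PForm α)) (X : Set α) : Prop :=
  satTh X (reductTh X Γ) ∧ ∀ Y : Set α, Y ⊂ X → ¬ satTh Y (reductTh X Γ)

def htSatTh (X Y : Set α) (Γ : Set (PForm α)) : Prop := ∀ F ∈ Γ, PForm.htSat X Y F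

def theoryHeadAtoms (Γ : Set (PForm α)) : Set α := ⋃ F ∈ Γ, PForm.headAtoms F


lemma sat_reduct_self {α : Type} (X : Set α) (F : PForm α) :
    PForm.sat X (PForm.reduct X F) ↔ PForm.sat X F := by
  induction F with
  | bot => simp [PForm.reduct]
  | atom a =>
      by_cases h : a ∈ X <;> simp [PForm.reduct, PForm.sat, h]
  | and F G ihF ihG =>
      by_cases h : PForm.sat X (PForm.and F G)
      · rw [PForm.reduct, if_pos h]
        simp only [PForm.sat, ihF, ihG]
      · rw [PForm.reduct, if_neg h]
        simp only [PForm.sat]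
        tauto
  | or F G ihF ihG =>
      by_cases h : PForm.sat X (PForm.or F G)
      · rw [PForm.reduct, if_pos h]
        simp only [PForm.sat, ihF, ihG]
      · rw [PForm.reduct, if_neg h]
        simp only [PForm.sat]
        tauto
  | imp F G ihF ihG =>
      by_cases h : PForm.sat X (PForm.imp F G)
      · rw [PForm.reduct, if_pos h]
        simp only [PForm.sat, ihF, ihG]
      · rw [PForm.reduct, if_neg h]
        simp only [PForm.sat]
        tauto

lemma sat_of_sat_reduct {α : Type} (X Y : Set α) (F : PForm α)
    (h : PForm.sat Y (PForm.reduct X F)) : PForm.sat X F := by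
  induction F with
  | bot => simp [PForm.reduct, PForm.sat] at h
  | atom a =>
      by_cases hx : a ∈ X
      · exact hx
      · rw [PForm.reduct, if_neg hx] at h
        exact absurd h (by simp [PForm.sat])
  | and F G ihF ihG =>
      by_cases hx : PForm.sat X (PForm.and F G)
      · exact hx
      · rw [PForm.reduct, if_neg hx] at h
        exact absurd h (by simp [PForm.sat])
  | or F G ihF ihG =>
      by_cases hx : PForm.sat X (PForm.or F G)
      · exact hx
      · rw [PForm.reduct, if_neg hx] at h
        exact absurd h (by simp [PForm.sat])
  | imp F G ihF ihG =>
      by_cases hx : PForm.sat X (PForm.imp F G)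
      · exact hx
      · rw [PForm.reduct, if_neg hx] at h
        exact absurd h (by simp [PForm.sat])

lemma sat_reduct_of_no_head {α : Type} (X Y : Set α) (F : PForm α)
    (hh : PForm.headAtoms F = ∅) (hs : PForm.sat X F) :
    PForm.sat Y (PForm.reduct X F) := by
  induction F with
  | bot => exact absurd hs (by simp [PForm.sat])
  | atom a => exact absurd hh (by simp [PForm.headAtoms])
  | and F G ihF ihG =>
      have h1 : PForm.headAtoms F = ∅ := by
        rw [Set.eq_empty_iff_forall_notMem]
        intro a ha
        have : a ∈ PForm.headAtoms (PForm.and F G) := Or.inl ha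
        rw [hh] at this; exact this
      have h2 : PForm.headAtoms G = ∅ := by
        rw [Set.eq_empty_iff_forall_notMem]
        intro a ha
        have : a ∈ PForm.headAtoms (PForm.and F G) := Or.inr ha
        rw [hh] at this; exact this
      rw [PForm.reduct, if_pos hs]
      exact ⟨ihF h1 hs.1, ihG h2 hs.2⟩
  | or F G ihF ihG =>
      have h1 : PForm.headAtoms F = ∅ := by
        rw [Set.eq_empty_iff_forall_notMem]
        intro a ha
        have : a ∈ PForm.headAtoms (PForm.or F G) := Or.inl ha
        rw [hh] at this; exact this
      have h2 : PForm.headAtoms G = ∅ := by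
        rw [Set.eq_empty_iff_forall_notMem]
        intro a ha
        have : a ∈ PForm.headAtoms (PForm.or F G) := Or.inr ha
        rw [hh] at this; exact this
      rw [PForm.reduct, if_pos hs]
      rcases hs with hsF | hsG
      · exact Or.inl (ihF h1 hsF)
      · exact Or.inr (ihG h2 hsG)
  | imp F G ihF ihG =>
      have hG : PForm.headAtoms G = ∅ := hh
      rw [PForm.reduct, if_pos hs]
      intro hyF
      exact ihG hG (hs (sat_of_sat_reduct X Y F hyF))

/-- adding a theory without head atoms acts as a set of constraints. -/
theorem stmt7 (Γ₁ Γ₂ : Set (PForm α))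
    (h2 : ∀ F ∈ Γ₂, PForm.headAtoms F = ∅) (X : Set α) :
    StableModel (Γ₁ ∪ Γ₂) X ↔ (StableModel Γ₁ X ∧ satTh X Γ₂) := by
  have himg : reductTh X (Γ₁ ∪ Γ₂) = reductTh X Γ₁ ∪ reductTh X Γ₂ :=
    Set.image_union _ _ _
  constructor
  · rintro ⟨hsat, hmin⟩
    have hX2 : satTh X Γ₂ := by
      intro F hF
      have := hsat (PForm.reduct X F) ⟨F, Or.inr hF, rfl⟩
      exact (sat_reduct_self X F).mp this
    refine ⟨⟨?_, ?_⟩, hX2⟩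
    · rintro G ⟨F, hF, rfl⟩
      exact hsat (PForm.reduct X F) ⟨F, Or.inl hF, rfl⟩
    · intro Y hY hYsat
      apply hmin Y hY
      rintro G ⟨F, hF | hF, rfl⟩
      · exact hYsat _ ⟨F, hF, rfl⟩
      · exact sat_reduct_of_no_head X Y F (h2 F hF) (hX2 F hF)
  · rintro ⟨⟨hsat, hmin⟩, hX2⟩
    constructor
    · rintro G ⟨F, hF | hF, rfl⟩
      · exact hsat _ ⟨F, hF, rfl⟩
      · exact (sat_reduct_self X F).mpr (hX2 F hF)
    · intro Y hY hYsat
      apply hmin Y hY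
      rintro G ⟨F, hF, rfl⟩
      exact hYsat _ ⟨F, Or.inl hF, rfl⟩
end

section
/- Completion Lemma: Let Γ be a propositional theory and Q a set of atoms whose positive occurrences in Γ are all within the scope of negation. For each q ∈ Q, let Def(q) be a formula in which all negative occurrences of atoms from Q are within the scope of negation. Then Γ ∪ {Def(q) → q : q ∈ Q} and Γ ∪ {Def(q) ↔ q : q ∈ Q} have the same stable models. -/
variable {α : Type}

/-- `occOK S b F` holds when every occurrence of an atom from S in F whose polarity is `b`
(`true` = positive, i.e. in the antecedent of an even number of implications) lies in the
scope of negation (inside a subformula of the form `G → ⊥`). -/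
def occOK (S : Set α) : Bool → PForm α → Prop
  | _, PForm.bot => True
  | b, PForm.atom a => b = false ∨ a ∉ S
  | b, PForm.and F G => occOK S b F ∧ occOK S b G
  | b, PForm.or F G => occOK S b F ∧ occOK S b G
  | _, PForm.imp _ PForm.bot => True
  | b, PForm.imp F G => occOK S (!b) F ∧ occOK S b G

namespace PForm

lemma persist {X Y : Set α} (hYX : Y ⊆ X) : ∀ F : PForm α, htSat Y X F → sat X F
  | bot, h => h
  | atom _, h => hYX h
  | and F G, h => ⟨persist hYX F h.1, persist hYX G h.2⟩
  | or F G, h => h.elim (fun h => Or.inl (persist hYX F h)) (fun h => Or.inr (persist hYX G h))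
  | imp _ _, h => h.2

lemma htSat_refl (X : Set α) : ∀ F : PForm α, htSat X X F ↔ sat X F
  | bot => Iff.rfl
  | atom _ => Iff.rfl
  | and F G => by
      have h1 := htSat_refl X F; have h2 := htSat_refl X G
      exact Iff.intro (fun h => ⟨h1.1 h.1, h2.1 h.2⟩) (fun h => ⟨h1.2 h.1, h2.2 h.2⟩)
  | or F G => by
      have h1 := htSat_refl X F; have h2 := htSat_refl X G
      exact Iff.intro (fun h => h.elim (fun h => Or.inl (h1.1 h)) (fun h => Or.inr (h2.1 h)))
        (fun h => h.elim (fun h => Or.inl (h1.2 h)) (fun h => Or.inr (h2.2 h)))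
  | imp F G => by
      have h1 := htSat_refl X F; have h2 := htSat_refl X G
      exact Iff.intro (fun h => h.2)
        (fun h => ⟨fun hF => h2.2 (h (h1.1 hF)), h⟩)

lemma sat_reduct {Y X : Set α} (hYX : Y ⊆ X) : ∀ F : PForm α, sat Y (reduct X F) ↔ htSat Y X F
  | bot => Iff.rfl
  | atom a => by
      by_cases h : a ∈ X
      · simp only [reduct, if_pos h]; exact Iff.rfl
      · simp only [reduct, if_neg h]
        exact iff_of_false (fun hx => hx) (fun hy => h (hYX hy))
  | and F G => by
      have h1 := sat_reduct hYX F; have h2 := sat_reduct hYX G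
      by_cases h : sat X (and F G)
      · simp only [reduct, if_pos h]
        exact Iff.intro (fun hx => ⟨h1.1 hx.1, h2.1 hx.2⟩) (fun hx => ⟨h1.2 hx.1, h2.2 hx.2⟩)
      · simp only [reduct, if_neg h]
        exact iff_of_false (fun hx => hx) (fun hy => h (persist hYX _ hy))
  | or F G => by
      have h1 := sat_reduct hYX F; have h2 := sat_reduct hYX G
      by_cases h : sat X (or F G)
      · simp only [reduct, if_pos h]
        exact Iff.intro (fun hx => hx.elim (fun hx => Or.inl (h1.1 hx)) (fun hx => Or.inr (h2.1 hx)))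
          (fun hx => hx.elim (fun hx => Or.inl (h1.2 hx)) (fun hx => Or.inr (h2.2 hx)))
      · simp only [reduct, if_neg h]
        exact iff_of_false (fun hx => hx) (fun hy => h (persist hYX _ hy))
  | imp F G => by
      have h1 := sat_reduct hYX F; have h2 := sat_reduct hYX G
      by_cases h : sat X (imp F G)
      · simp only [reduct, if_pos h]
        exact Iff.intro (fun hx => ⟨fun hF => h2.1 (hx (h1.2 hF)), h⟩)
          (fun hx hF => h2.2 (hx.1 (h1.1 hF)))
      · simp only [reduct, if_neg h]
        exact iff_of_false (fun hx => hx) (fun hy => h hy.2)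

end PForm

lemma occOK_imp_iff {S : Set α} {b : Bool} {F G : PForm α} (hG : G ≠ PForm.bot) :
    occOK S b (PForm.imp F G) ↔ occOK S (!b) F ∧ occOK S b G := by
  cases G with
  | bot => exact absurd rfl hG
  | atom a => exact Iff.rfl
  | and _ _ => exact Iff.rfl
  | or _ _ => exact Iff.rfl
  | imp _ _ => exact Iff.rfl

lemma occ_mono {Q X : Set α} (F : PForm α) : ∀ (b : Bool), occOK Q b F →
    ∀ ⦃Z Y : Set α⦄, Z ⊆ Y → Y ⊆ X → Y \ Z ⊆ Q →
      ((b = true → (PForm.htSat Y X F → PForm.htSat Z X F)) ∧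
       (b = false → (PForm.htSat Z X F → PForm.htSat Y X F))) := by
  induction F with
  | bot =>
      intro b _ Z Y _ _ _
      exact ⟨fun _ h => h.elim, fun _ h => h.elim⟩
  | atom a =>
      intro b hocc Z Y hZY hYX hdiff
      have hocc' : b = false ∨ a ∉ Q := hocc
      constructor
      · rintro rfl hY
        by_contra hZ
        rcases hocc' with h | h
        · cases h
        · exact h (hdiff ⟨hY, hZ⟩)
      · rintro rfl h
        exact hZY h
  | and F G ihF ihG =>
      intro b hocc Z Y hZY hYX hdiff
      have hocc' : occOK Q b F ∧ occOK Q b G := hocc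
      obtain ⟨hF, hG⟩ := hocc'
      constructor
      · rintro rfl h
        exact ⟨(ihF true hF hZY hYX hdiff).1 rfl h.1, (ihG true hG hZY hYX hdiff).1 rfl h.2⟩
      · rintro rfl h
        exact ⟨(ihF false hF hZY hYX hdiff).2 rfl h.1, (ihG false hG hZY hYX hdiff).2 rfl h.2⟩
  | or F G ihF ihG =>
      intro b hocc Z Y hZY hYX hdiff
      have hocc' : occOK Q b F ∧ occOK Q b G := hocc
      obtain ⟨hF, hG⟩ := hocc'
      constructor
      · rintro rfl h
        exact h.elim (fun h => Or.inl ((ihF true hF hZY hYX hdiff).1 rfl h))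
          (fun h => Or.inr ((ihG true hG hZY hYX hdiff).1 rfl h))
      · rintro rfl h
        exact h.elim (fun h => Or.inl ((ihF false hF hZY hYX hdiff).2 rfl h))
          (fun h => Or.inr ((ihG false hG hZY hYX hdiff).2 rfl h))
  | imp F G ihF ihG =>
      intro b hocc Z Y hZY hYX hdiff
      by_cases hG : G = PForm.bot
      · subst hG
        have hiff : ∀ W : Set α, W ⊆ X →
            (PForm.htSat W X (PForm.imp F PForm.bot) ↔ ¬ PForm.sat X F) := by
          intro W hW
          constructor
          · intro h hF
            exact h.2 hF
          · intro h
            exact ⟨fun hF => (h (PForm.persist hW F hF)).elim, fun hF => h hF⟩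
        constructor
        · rintro rfl h
          exact (hiff Z (hZY.trans hYX)).2 ((hiff Y hYX).1 h)
        · rintro rfl h
          exact (hiff Y hYX).2 ((hiff Z (hZY.trans hYX)).1 h)
      · rw [occOK_imp_iff hG] at hocc
        obtain ⟨hF, hG'⟩ := hocc
        constructor
        · rintro rfl h
          refine ⟨fun hZF => ?_, h.2⟩
          have hYF : PForm.htSat Y X F := (ihF false hF hZY hYX hdiff).2 rfl hZF
          exact (ihG true hG' hZY hYX hdiff).1 rfl (h.1 hYF)
        · rintro rfl h
          refine ⟨fun hYF => ?_, h.2⟩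
          have hZF : PForm.htSat Z X F := (ihF true hF hZY hYX hdiff).1 rfl hYF
          exact (ihG false hG' hZY hYX hdiff).2 rfl (h.1 hZF)

lemma satTh_reduct {Y X : Set α} (h : Y ⊆ X) (Γ : Set (PForm α)) :
    satTh Y (reductTh X Γ) ↔ htSatTh Y X Γ := by
  constructor
  · intro hs F hF
    exact (PForm.sat_reduct h F).1 (hs _ ⟨F, hF, rfl⟩)
  · rintro hs F ⟨G, hG, rfl⟩
    exact (PForm.sat_reduct h G).2 (hs G hG)

lemma stable_iff (Γ : Set (PForm α)) (X : Set α) :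
    StableModel Γ X ↔ satTh X Γ ∧ ∀ Y, Y ⊂ X → ¬ htSatTh Y X Γ := by
  have h1 : satTh X (reductTh X Γ) ↔ satTh X Γ := by
    rw [satTh_reduct (le_refl X) Γ]
    exact ⟨fun hs F hF => (PForm.htSat_refl X F).1 (hs F hF),
           fun hs F hF => (PForm.htSat_refl X F).2 (hs F hF)⟩
  constructor
  · rintro ⟨ha, hb⟩
    exact ⟨h1.1 ha, fun Y hY hsat => hb Y hY ((satTh_reduct hY.subset Γ).2 hsat)⟩
  · rintro ⟨ha, hb⟩
    exact ⟨h1.2 ha, fun Y hY hsat => hb Y hY ((satTh_reduct hY.subset Γ).1 hsat)⟩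

/-- Completion Lemma. -/
theorem stmt10 (Γ : Set (PForm α)) (Q : Set α) (Def : α → PForm α)
    (hΓ : ∀ F ∈ Γ, occOK Q true F)
    (hDef : ∀ q ∈ Q, occOK Q false (Def q))
    (X : Set α) :
    StableModel (Γ ∪ {F | ∃ q ∈ Q, F = PForm.imp (Def q) (PForm.atom q)}) X ↔
    StableModel (Γ ∪ {F | ∃ q ∈ Q,
      F = PForm.and (PForm.imp (Def q) (PForm.atom q))
                    (PForm.imp (PForm.atom q) (Def q))}) X := by
  classical
  set Γ₁ : Set (PForm α) := Γ ∪ {F | ∃ q ∈ Q, F = PForm.imp (Def q) (PForm.atom q)} with hG1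
  set Γ₂ : Set (PForm α) := Γ ∪ {F | ∃ q ∈ Q,
      F = PForm.and (PForm.imp (Def q) (PForm.atom q))
                    (PForm.imp (PForm.atom q) (Def q))} with hG2
  have mem1 : ∀ q ∈ Q, PForm.imp (Def q) (PForm.atom q) ∈ Γ₁ :=
    fun q hq => Or.inr ⟨q, hq, rfl⟩
  have mem2 : ∀ q ∈ Q, PForm.and (PForm.imp (Def q) (PForm.atom q))
      (PForm.imp (PForm.atom q) (Def q)) ∈ Γ₂ :=
    fun q hq => Or.inr ⟨q, hq, rfl⟩
  rw [stable_iff, stable_iff]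
  constructor
  · rintro ⟨hsat1, hmin1⟩
    -- X satisfies q → Def q for all q ∈ Q
    have hXQ : ∀ q ∈ Q, q ∈ X → PForm.sat X (Def q) := by
      by_contra hcon
      push_neg at hcon
      obtain ⟨q0, hq0Q, hq0X, hq0⟩ := hcon
      set B : Set α := {q | q ∈ Q ∧ q ∈ X ∧ ¬ PForm.sat X (Def q)} with hB
      have hBQ : B ⊆ Q := fun a ha => ha.1
      set Y : Set α := X \ B with hYdef
      have hYX : Y ⊂ X := (Set.ssubset_iff_of_subset Set.diff_subset).2
        ⟨q0, hq0X, fun hy => hy.2 ⟨hq0Q, hq0X, hq0⟩⟩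
      have hdiff : X \ Y ⊆ Q := fun a ha =>
        hBQ (Classical.byContradiction fun hb => ha.2 ⟨ha.1, hb⟩)
      apply hmin1 Y hYX
      intro F hF
      rcases hF with hF | ⟨q, hq, rfl⟩
      · have hx : PForm.htSat X X F := (PForm.htSat_refl X F).2 (hsat1 F (Or.inl hF))
        exact (occ_mono F true (hΓ F hF) Set.diff_subset (le_refl X) hdiff).1 rfl hx
      · refine ⟨fun hDefq => ?_, hsat1 _ (mem1 q hq)⟩
        have hsatD : PForm.sat X (Def q) := PForm.persist Set.diff_subset (Def q) hDefq
        have hqX : q ∈ X := hsat1 _ (mem1 q hq) hsatD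
        exact ⟨hqX, fun hb => hb.2.2 hsatD⟩
    have hsat2 : satTh X Γ₂ := by
      intro F hF
      rcases hF with hF | ⟨q, hq, rfl⟩
      · exact hsat1 F (Or.inl hF)
      · exact ⟨hsat1 _ (mem1 q hq), fun hqX => hXQ q hq hqX⟩
    refine ⟨hsat2, fun Y hY hht => hmin1 Y hY (fun F hF => ?_)⟩
    rcases hF with hF | ⟨q, hq, rfl⟩
    · exact hht F (Or.inl hF)
    · exact (hht _ (mem2 q hq)).1
  · rintro ⟨hsat2, hmin2⟩
    have hsat1 : satTh X Γ₁ := by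
      intro F hF
      rcases hF with hF | ⟨q, hq, rfl⟩
      · exact hsat2 F (Or.inl hF)
      · exact (hsat2 _ (mem2 q hq)).1
    refine ⟨hsat1, fun Y hY hht => ?_⟩
    have hYX : Y ⊆ X := hY.subset
    set base : Set α := Y \ Q with hbase
    set Fam : Set (Set α) :=
      {S | S ⊆ Q ∩ Y ∧ ∀ q ∈ S, PForm.htSat (base ∪ S) X (Def q)} with hFam
    set Sst : Set α := ⋃₀ Fam with hSst
    set Z : Set α := base ∪ Sst with hZdef
    have hSstQY : Sst ⊆ Q ∩ Y := Set.sUnion_subset fun S hS => hS.1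
    have hZY : Z ⊆ Y :=
      Set.union_subset Set.diff_subset (hSstQY.trans Set.inter_subset_right)
    have hZX : Z ⊆ X := hZY.trans hYX
    have hYZQ : Y \ Z ⊆ Q := fun a ha =>
      Classical.byContradiction fun hq => ha.2 (Or.inl ⟨ha.1, hq⟩)
    have hb : ∀ q ∈ Sst, PForm.htSat Z X (Def q) := by
      rintro q ⟨S, hS, hqS⟩
      have h1 : PForm.htSat (base ∪ S) X (Def q) := hS.2 q hqS
      have hsub : base ∪ S ⊆ Z :=
        Set.union_subset_union_right _ (Set.subset_sUnion_of_mem hS)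
      have hdiff : Z \ (base ∪ S) ⊆ Q := by
        rintro a ⟨haZ, han⟩
        rcases haZ with h | h
        · exact absurd (Or.inl h) han
        · exact (hSstQY h).1
      exact (occ_mono (Def q) false (hDef q (hS.1 hqS).1) hsub hZX hdiff).2 rfl h1
    have hc : ∀ q ∈ Q, q ∈ Y → PForm.htSat Z X (Def q) → q ∈ Sst := by
      intro q hqQ hqY hht'
      have hmem : insert q Sst ∈ Fam := by
        constructor
        · exact Set.insert_subset_iff.2 ⟨⟨hqQ, hqY⟩, hSstQY⟩
        · intro r hr
          have hrQ : r ∈ Q := by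
            rcases hr with rfl | hr
            · exact hqQ
            · exact (hSstQY hr).1
          have hZsub : Z ⊆ base ∪ insert q Sst :=
            Set.union_subset_union_right _ (Set.subset_insert q Sst)
          have hXsub : base ∪ insert q Sst ⊆ X :=
            Set.union_subset (Set.diff_subset.trans hYX)
              (Set.insert_subset_iff.2
                ⟨hYX hqY, (hSstQY.trans Set.inter_subset_right).trans hYX⟩)
          have hdiff : (base ∪ insert q Sst) \ Z ⊆ Q := by
            rintro a ⟨ha, haZ⟩
            rcases ha with h | h
            · exact absurd (Or.inl h) haZ
            · rcases h with rfl | h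
              · exact hqQ
              · exact absurd (Or.inr h) haZ
          have hr' : PForm.htSat Z X (Def r) := by
            rcases hr with rfl | hr
            · exact hht'
            · exact hb r hr
          exact (occ_mono (Def r) false (hDef r hrQ) hZsub hXsub hdiff).2 rfl hr'
      exact Set.subset_sUnion_of_mem hmem (Set.mem_insert q Sst)
    apply hmin2 Z (lt_of_le_of_lt hZY hY)
    intro F hF
    rcases hF with hF | ⟨q, hq, rfl⟩
    · exact (occ_mono F true (hΓ F hF) hZY hYX hYZQ).1 rfl (hht F (Or.inl hF))
    · have hsA : PForm.sat X (PForm.imp (Def q) (PForm.atom q)) := (hsat2 _ (mem2 q hq)).1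
      have hsB : PForm.sat X (PForm.imp (PForm.atom q) (Def q)) := (hsat2 _ (mem2 q hq)).2
      refine ⟨⟨fun hDq => ?_, hsA⟩, ⟨fun hqZ => ?_, hsB⟩⟩
      · -- htSat Z X (Def q) → q ∈ Z
        have hYDq : PForm.htSat Y X (Def q) :=
          (occ_mono (Def q) false (hDef q hq) hZY hYX hYZQ).2 rfl hDq
        have hqY : q ∈ Y := (hht _ (mem1 q hq)).1 hYDq
        exact Or.inr (hc q hq hqY hDq)
      · -- q ∈ Z → htSat Z X (Def q)
        rcases hqZ with h | h
        · exact absurd hq h.2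
        · exact hb q h
end
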